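/- Let n ≥ 1 be an integer, θ ∈ (0,1), c ≥ 1 an integer, F a finite family of nonempty subsets of {1,…,n}, and π : F → ℝ with π(S) > 0 for all S ∈ F. Let p be a schedule and suppose there exists λ ∈ ℝ such that W_i(p) = λ for every i ∈ {1,…,n}. Then p is a global minimizer of the θ-cost over the standard simplex: cost_θ(p) ≤ cost_θ(q) for every schedule q. -/

import Mathlib

/-!
Each summand `π S / (1 - θ (1 - p(S))^c)` is a convex function of `p(S) ∈ [0,1]`, being an
increasing convex function of the convex function `θ (1 - p(S))^c`. Hence the cost lies above
its tangent plane at `p`: `cost q ≥ cost p + Σᵢ Wᵢ(p) (pᵢ - qᵢ)`. When all `Wᵢ(p)` equal `λ`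
the linear term is `λ (Σᵢ pᵢ - Σᵢ qᵢ) = 0`.
-/

open Finset

section Tangent

variable {R : Type*} [Field R] [LinearOrder R] [IsStrictOrderedRing R]

lemma pow_add_mul_sub_le_pow {u v : R} (hu : 0 ≤ u) (hv : 0 ≤ v) (c : ℕ) :
    v ^ c + c * v ^ (c - 1) * (u - v) ≤ u ^ c := by
  rcases c with _ | k
  · simp
  rcases hv.eq_or_lt with rfl | hv
  · rcases k with _ | k <;> simp [pow_nonneg hu]
  have bernoulli := one_add_mul_sub_le_pow (by linarith [div_nonneg hu hv.le] : (-1 : R) ≤ u / v)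
    (k + 1)
  rw [Nat.add_sub_cancel]
  calc v ^ (k + 1) + ((k + 1 : ℕ) : R) * v ^ k * (u - v)
      = v ^ (k + 1) * (1 + ((k + 1 : ℕ) : R) * (u / v - 1)) := by field_simp; ring
    _ ≤ v ^ (k + 1) * (u / v) ^ (k + 1) := by gcongr
    _ = u ^ (k + 1) := by rw [div_pow]; field_simp

lemma one_div_add_div_sq_le_one_div_sub {b x : R} (hb : 0 < b) (hbx : 0 < b - x) :
    1 / b + x / b ^ 2 ≤ 1 / (b - x) := by
  rw [div_add_div _ _ hb.ne' (by positivity), div_le_div_iff₀ (by positivity) hbx]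
  nlinarith [sq_nonneg x]

lemma one_div_one_sub_mul_pow_tangent {θ u v : R} (hθ0 : 0 ≤ θ) (hθ1 : θ < 1)
    (hu0 : 0 ≤ u) (hu1 : u ≤ 1) (hv0 : 0 ≤ v) (hv1 : v ≤ 1) (c : ℕ) :
    1 / (1 - θ * v ^ c) + θ * c * v ^ (c - 1) * (u - v) / (1 - θ * v ^ c) ^ 2
      ≤ 1 / (1 - θ * u ^ c) := by
  have hu : 0 < 1 - θ * u ^ c := by nlinarith [pow_le_one₀ hu0 hu1 (n := c), pow_nonneg hu0 c]
  have hv : 0 < 1 - θ * v ^ c := by nlinarith [pow_le_one₀ hv0 hv1 (n := c), pow_nonneg hv0 c]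
  have hlin : θ * c * v ^ (c - 1) * (u - v) ≤ θ * (u ^ c - v ^ c) := by
    nlinarith [pow_add_mul_sub_le_pow hu0 hv0 c]
  calc 1 / (1 - θ * v ^ c) + θ * c * v ^ (c - 1) * (u - v) / (1 - θ * v ^ c) ^ 2
      ≤ 1 / (1 - θ * v ^ c) + θ * (u ^ c - v ^ c) / (1 - θ * v ^ c) ^ 2 := by gcongr
    _ ≤ 1 / (1 - θ * v ^ c - θ * (u ^ c - v ^ c)) :=
        one_div_add_div_sq_le_one_div_sub hv (by linarith)
    _ = 1 / (1 - θ * u ^ c) := by ring_nf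

end Tangent

lemma sum_mul_sum_eq_sum_mul_sum_filter {ι R : Type*} [Fintype ι] [DecidableEq ι]
    [CommSemiring R] (F : Finset (Finset ι)) (w : Finset ι → R) (x : ι → R) :
    ∑ S ∈ F, w S * ∑ i ∈ S, x i = ∑ i, x i * ∑ S ∈ F with i ∈ S, w S := by
  simp only [mul_sum]
  rw [sum_comm' (t' := univ) (s' := fun i => F.filter (i ∈ ·)) (by simp)]
  simp only [mul_comm]

lemma sum_mem_Icc_of_mem_stdSimplex {ι : Type*} [Fintype ι] {p : ι → ℝ}
    (hp : p ∈ stdSimplex ℝ ι) (S : Finset ι) : ∑ i ∈ S, p i ∈ Set.Icc 0 1 :=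
  ⟨sum_nonneg fun i _ => hp.1 i,
    hp.2 ▸ sum_le_sum_of_subset_of_nonneg (subset_univ S) fun i _ _ => hp.1 i⟩

theorem sum_div_one_sub_mul_pow_tangent {ι : Type*} [Fintype ι] [DecidableEq ι]
    (F : Finset (Finset ι)) (π : Finset ι → ℝ) (hπ : ∀ S ∈ F, 0 ≤ π S)
    {θ : ℝ} (hθ0 : 0 ≤ θ) (hθ1 : θ < 1) (c : ℕ) {p q : ι → ℝ}
    (hp : p ∈ stdSimplex ℝ ι) (hq : q ∈ stdSimplex ℝ ι) :
    ∑ S ∈ F, π S / (1 - θ * (1 - ∑ i ∈ S, p i) ^ c)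
        + ∑ i, (p i - q i) * ∑ S ∈ F with i ∈ S,
          θ * c * π S * (1 - ∑ j ∈ S, p j) ^ (c - 1) / (1 - θ * (1 - ∑ j ∈ S, p j) ^ c) ^ 2
      ≤ ∑ S ∈ F, π S / (1 - θ * (1 - ∑ i ∈ S, q i) ^ c) := by
  rw [← sum_mul_sum_eq_sum_mul_sum_filter, ← sum_add_distrib]
  refine sum_le_sum fun S hS => ?_
  obtain ⟨hpS0, hpS1⟩ := sum_mem_Icc_of_mem_stdSimplex hp S
  obtain ⟨hqS0, hqS1⟩ := sum_mem_Icc_of_mem_stdSimplex hq S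
  have tangent := mul_le_mul_of_nonneg_left
    (one_div_one_sub_mul_pow_tangent hθ0 hθ1 (u := 1 - ∑ i ∈ S, q i) (v := 1 - ∑ i ∈ S, p i)
      (by linarith) (by linarith) (by linarith) (by linarith) c) (hπ S hS)
  rw [sum_sub_distrib]
  convert tangent using 1 <;> ring

theorem stmt10_general (n : ℕ) (θ : ℝ) (hθ : θ ∈ Set.Ioo (0 : ℝ) 1)
    (c : ℕ) (F : Finset (Finset (Fin n)))
    (π : Finset (Fin n) → ℝ) (hπ : ∀ S ∈ F, 0 < π S)
    (cost : (Fin n → ℝ) → ℝ)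
    (hcost : ∀ p, cost p = ∑ S ∈ F, π S / (1 - θ * (1 - ∑ i ∈ S, p i) ^ c))
    (W : (Fin n → ℝ) → Fin n → ℝ)
    (hW : ∀ p i, W p i = ∑ S ∈ F.filter (fun S => i ∈ S),
        θ * c * π S * (1 - ∑ j ∈ S, p j) ^ (c - 1)
          / (1 - θ * (1 - ∑ j ∈ S, p j) ^ c) ^ 2)
    (p : Fin n → ℝ) (hp : p ∈ stdSimplex ℝ (Fin n))
    (lam : ℝ) (heq : ∀ i, W p i = lam) :
    ∀ q ∈ stdSimplex ℝ (Fin n), cost p ≤ cost q := by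
  intro q hq
  have tangent := sum_div_one_sub_mul_pow_tangent F π (fun S hS => (hπ S hS).le)
    hθ.1.le hθ.2 c hp hq
  have linear_term_vanishes : ∑ i, (p i - q i) * W p i = 0 := by
    simp only [heq, ← sum_mul, sum_sub_distrib, hp.2, hq.2, sub_self, zero_mul]
  simp only [← hW p, ← hcost] at tangent
  linarith

/-- If `p` is a schedule and there exists `λ ∈ ℝ` with
`W_i(p) = λ` for every `i`, then `p` is a global minimizer of `cost_θ` over the
standard simplex. -/
theorem stmt10 (n : ℕ) (hn : 1 ≤ n) (θ : ℝ) (hθ : θ ∈ Set.Ioo (0 : ℝ) 1)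
    (c : ℕ) (hc : 1 ≤ c) (F : Finset (Finset (Fin n)))
    (hF : ∀ S ∈ F, S.Nonempty)
    (π : Finset (Fin n) → ℝ) (hπ : ∀ S ∈ F, 0 < π S)
    (cost : (Fin n → ℝ) → ℝ)
    (hcost : ∀ p, cost p = ∑ S ∈ F, π S / (1 - θ * (1 - ∑ i ∈ S, p i) ^ c))
    (W : (Fin n → ℝ) → Fin n → ℝ)
    (hW : ∀ p i, W p i = ∑ S ∈ F.filter (fun S => i ∈ S),
        θ * c * π S * (1 - ∑ j ∈ S, p j) ^ (c - 1)
          / (1 - θ * (1 - ∑ j ∈ S, p j) ^ c) ^ 2)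
    (p : Fin n → ℝ) (hp : p ∈ stdSimplex ℝ (Fin n))
    (lam : ℝ) (heq : ∀ i, W p i = lam) :
    ∀ q ∈ stdSimplex ℝ (Fin n), cost p ≤ cost q :=
  stmt10_general n θ hθ c F π hπ cost hcost W hW p hp lam heq
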